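/- (Lemma 3) In any SPIR scheme on a graph G satisfying the system model: for any two servers i and j that share the message W_k and randomness R_k (i.e., edge k joins vertices i and j), it holds that H(A_i^{[k]} | 𝒬) + H(A_j^{[k]} | 𝒬) ≥ H(A_i^{[k]} | R_k̄, W_k̄, 𝒬) + H(A_j^{[k]} | R_k̄, W_k̄, 𝒬) ≥ (1 + ρ)·L. -/

import Mathlib

/-! With `B = (R_k̄, W_k̄, 𝒬)`, the first inequality holds because conditioning on `B` instead of
on its component `𝒬` can only lower entropy. For the second, the answers `A_i, A_j` together with
`B` determine every other answer (the other servers store nothing about `k`), hence `W_k` by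
reliability and then `R_k` by randomness recoverability at `i`. Therefore
`H(A_i|B) + H(A_j|B) ≥ H(A_i, A_j|B) ≥ H(W_k, R_k|B)`, and the last term equals
`H(W_k) + H(R_k) = L + ρL` because `W_k`, `R_k` and `B` are independent. -/

open Finset

noncomputable section

namespace SPIR

variable {Ω : Type} [Fintype Ω]

/-- Probability of an event under the probability mass function `μ`
on the finite sample space `Ω`. -/
def pr (μ : Ω → ℝ) (E : Set Ω) : ℝ := ∑ ω, E.indicator μ ω

/-- Shannon entropy of the random variable `X`, measured in `q`-ary units. -/
def ent (q : ℕ) (μ : Ω → ℝ) {α : Type*} (X : Ω → α) : ℝ :=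
  -∑ ω, μ ω * Real.logb q (pr μ {ω' | X ω' = X ω})

/-- Conditional Shannon entropy `H(X | Y)` in `q`-ary units. -/
def condEnt (q : ℕ) (μ : Ω → ℝ) {α β : Type*} (X : Ω → α) (Y : Ω → β) : ℝ :=
  ent q μ (fun ω => (X ω, Y ω)) - ent q μ Y

/-- Mutual information `I(X ; Y)` in `q`-ary units. -/
def mutInf (q : ℕ) (μ : Ω → ℝ) {α β : Type*} (X : Ω → α) (Y : Ω → β) : ℝ :=
  ent q μ X + ent q μ Y - ent q μ (fun ω => (X ω, Y ω))

/-- Two random variables have the same (joint) distribution. -/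
def IdentDist (μ : Ω → ℝ) {α : Type*} (X Y : Ω → α) : Prop :=
  ∀ s : Set α, pr μ (X ⁻¹' s) = pr μ (Y ⁻¹' s)

/-- Independence of two random variables. -/
def IndepRV (μ : Ω → ℝ) {α β : Type*} (X : Ω → α) (Y : Ω → β) : Prop :=
  ∀ (s : Set α) (t : Set β),
    pr μ (X ⁻¹' s ∩ Y ⁻¹' t) = pr μ (X ⁻¹' s) * pr μ (Y ⁻¹' t)

/-- A symmetric private information retrieval (SPIR) scheme on a graph-replicated
database, following the system model:  `N` servers are the vertices of a simple graph
whose `K` edges are messages; message `W k` (uniform on `F^L`) and the message-specific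
common randomness `R k` are stored exactly at the two endpoints `e1 k`, `e2 k` of
edge `k`.  All Shannon quantities are in `q`-ary units, `q = |F|`. -/
structure Scheme (q N K L : ℕ) (F : Type) [Field F] [Fintype F]
    (Ω : Type) [Fintype Ω] where
  /-- the underlying probability mass function -/
  μ : Ω → ℝ
  μ_nonneg : ∀ ω, 0 ≤ μ ω
  μ_sum : ∑ ω, μ ω = 1
  card_F : Fintype.card F = q
  /-- first endpoint of each edge (message) -/
  e1 : Fin K → Fin N
  /-- second endpoint of each edge (message) -/
  e2 : Fin K → Fin N
  edge_ne : ∀ k, e1 k ≠ e2 k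
  /-- the graph is simple: distinct edges have distinct endpoint sets -/
  edge_inj : ∀ k k', ({e1 k, e2 k} : Set (Fin N)) = {e1 k', e2 k'} → k = k'
  /-- alphabet of the queries -/
  QT : Type
  /-- alphabet of the answers -/
  AT : Type
  /-- alphabet of the common randomness -/
  RT : Type
  /-- alphabet of the user's query randomness -/
  UT : Type
  /-- the messages -/
  W : Fin K → Ω → Fin L → F
  /-- the message-specific common randomness -/
  R : Fin K → Ω → RT
  /-- the user's query randomness `𝒬` -/
  U : Ω → UT
  /-- `Q n k` : query sent to server `n` when the desired message index is `k` -/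
  Q : Fin N → Fin K → Ω → QT
  /-- `A n k` : answer of server `n` when the desired message index is `k` -/
  A : Fin N → Fin K → Ω → AT
  /-- the messages are jointly independent, each uniform on `F^L` -/
  W_unif : ∀ w : Fin K → Fin L → F,
    pr μ {ω | (fun k => W k ω) = w} = (1 / (q : ℝ) ^ L) ^ K
  /-- the common randomness variables are jointly independent of each other and of the
  messages -/
  R_indep : ∀ (s : Fin K → Set RT) (t : Set (Fin K → Fin L → F)),
    pr μ {ω | (fun k => W k ω) ∈ t ∧ ∀ k, R k ω ∈ s k}
      = pr μ {ω | (fun k => W k ω) ∈ t} * ∏ k, pr μ {ω | R k ω ∈ s k}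
  /-- the common randomness variables are identically distributed -/
  R_ident : ∀ k k', IdentDist μ (R k) (R k')
  /-- the user's query randomness is independent of `(𝒲, ℛ)` -/
  U_indep : IndepRV μ U (fun ω => (fun k => W k ω, fun k => R k ω))
  /-- the queries are a deterministic function of `𝒬` -/
  query_det : ∀ k, condEnt q μ (fun ω (n : Fin N) => Q n k ω) U = 0
  /-- the answer of a server is a deterministic function of its query, its stored
  messages `𝒲ₙ` and its stored randomness `ℛₙ` -/
  answer_det : ∀ n k, condEnt q μ (A n k)
    (fun ω => (Q n k ω,
      fun j : {j : Fin K // e1 j = n ∨ e2 j = n} => W j ω,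
      fun j : {j : Fin K // e1 j = n ∨ e2 j = n} => R j ω)) = 0
  /-- user privacy: `(Qₙ^[k], Aₙ^[k], 𝒲ₙ, ℛₙ)` has the same distribution for all `k` -/
  user_privacy : ∀ (n : Fin N) (k k' : Fin K), IdentDist μ
    (fun ω => (Q n k ω, A n k ω,
      fun j : {j : Fin K // e1 j = n ∨ e2 j = n} => W j ω,
      fun j : {j : Fin K // e1 j = n ∨ e2 j = n} => R j ω))
    (fun ω => (Q n k' ω, A n k' ω,
      fun j : {j : Fin K // e1 j = n ∨ e2 j = n} => W j ω,
      fun j : {j : Fin K // e1 j = n ∨ e2 j = n} => R j ω))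
  /-- reliability: the desired message is recovered from all answers and `𝒬` -/
  reliability : ∀ k, condEnt q μ (W k)
    (fun ω => (fun n : Fin N => A n k ω, U ω)) = 0
  /-- database privacy -/
  db_privacy : ∀ (k : Fin K) (J : Set (Fin K)), k ∉ J →
    mutInf q μ (fun ω => fun j : J => W j ω)
      (fun ω => (fun n : Fin N => A n k ω,
        fun n : Fin N => Q n k ω,
        fun ℓ : {ℓ : Fin K // ℓ ∉ J} => R ℓ ω,
        fun ℓ : {ℓ : Fin K // ℓ ∉ J ∧ ℓ ≠ k} => W ℓ ω,
        U ω)) = 0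
  /-- randomness recoverability at each server storing `R j` -/
  rand_recov : ∀ (k j : Fin K) (n : Fin N), (e1 j = n ∨ e2 j = n) →
    condEnt q μ (R j)
      (fun ω => (A n k ω,
        fun m : {m : Fin K // e1 m = n ∨ e2 m = n} => W m ω,
        fun m : {m : Fin K // (e1 m = n ∨ e2 m = n) ∧ m ≠ j} => R m ω,
        Q n k ω)) = 0

/-- The simple graph underlying an SPIR scheme. -/
def schemeGraph {q N K L : ℕ} {F : Type} [Field F] [Fintype F]
    {Ω : Type} [Fintype Ω] (S : Scheme q N K L F Ω) : SimpleGraph (Fin N) :=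
  SimpleGraph.fromRel (fun i j => ∃ k, S.e1 k = i ∧ S.e2 k = j)

end SPIR

namespace SPIR

section Determines

variable {Ω : Type} {α β γ ι : Type*}

def Determines (μ : Ω → ℝ) (Y : Ω → β) (X : Ω → α) : Prop :=
  ∀ ω ω', 0 < μ ω → 0 < μ ω' → Y ω' = Y ω → X ω' = X ω

variable {μ : Ω → ℝ} {X : Ω → α} {Y : Ω → β} {Z : Ω → γ}

lemma determines_of_eq_imp_eq (h : ∀ ω ω', Y ω' = Y ω → X ω' = X ω) : Determines μ Y X :=
  fun ω ω' _ _ => h ω ω'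

lemma Determines.trans (hYX : Determines μ Y X) (hZY : Determines μ Z Y) : Determines μ Z X :=
  fun ω ω' hω hω' hZ => hYX ω ω' hω hω' (hZY ω ω' hω hω' hZ)

lemma Determines.comp (f : α → β) (h : Determines μ Z X) :
    Determines μ Z (fun ω => f (X ω)) :=
  fun ω ω' hω hω' hZ => congrArg f (h ω ω' hω hω' hZ)

lemma Determines.prodMk (hX : Determines μ Z X) (hY : Determines μ Z Y) :
    Determines μ Z (fun ω => (X ω, Y ω)) :=
  fun ω ω' hω hω' hZ => Prod.ext (hX ω ω' hω hω' hZ) (hY ω ω' hω hω' hZ)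

lemma Determines.pi {X : ι → Ω → α} (h : ∀ i, Determines μ Z (X i)) :
    Determines μ Z (fun ω i => X i ω) :=
  fun ω ω' hω hω' hZ => funext fun i => h i ω ω' hω hω' hZ

end Determines

variable {Ω : Type} [Fintype Ω]

section Probability

variable {μ : Ω → ℝ} {α : Type*}

lemma pr_congr {E E' : Set Ω} (h : ∀ ω, ω ∈ E ↔ ω ∈ E') : pr μ E = pr μ E' := by
  rw [Set.ext h]

lemma pr_nonneg (h0 : ∀ ω, 0 ≤ μ ω) (E : Set Ω) : 0 ≤ pr μ E :=
  sum_nonneg fun ω _ => Set.indicator_nonneg (fun ω _ => h0 ω) ω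

lemma pr_mono (h0 : ∀ ω, 0 ≤ μ ω) {E E' : Set Ω} (h : E ⊆ E') : pr μ E ≤ pr μ E' :=
  sum_le_sum fun ω _ => Set.indicator_le_indicator_of_subset h h0 ω

lemma le_pr (h0 : ∀ ω, 0 ≤ μ ω) {E : Set Ω} {ω₀ : Ω} (hω : ω₀ ∈ E) : μ ω₀ ≤ pr μ E := by
  rw [← Set.indicator_of_mem hω μ]
  exact single_le_sum (fun ω _ => Set.indicator_nonneg (fun ω _ => h0 ω) ω) (mem_univ ω₀)

lemma pr_sdiff {E E' : Set Ω} (h : E ⊆ E') : pr μ (E' \ E) = pr μ E' - pr μ E := by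
  simp only [pr, Set.indicator_sdiff h, Pi.sub_apply, sum_sub_distrib]

lemma pr_univ (h1 : ∑ ω, μ ω = 1) : pr μ Set.univ = 1 := by
  simp [pr, h1]

lemma sum_pr_eq_and [DecidableEq α] (X : Ω → α) (t : Finset α) (P : Ω → Prop) :
    ∑ x ∈ t, pr μ {ω | X ω = x ∧ P ω} = pr μ {ω | X ω ∈ t ∧ P ω} := by
  classical
  simp only [pr, Set.indicator_apply, Set.mem_ofPred_eq]
  rw [sum_comm]
  refine sum_congr rfl fun ω _ => ?_
  by_cases hP : P ω <;> simp [hP]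

lemma sum_pr_image_eq_and [DecidableEq α] (X : Ω → α) (P : Ω → Prop) :
    ∑ x ∈ univ.image X, pr μ {ω | X ω = x ∧ P ω} = pr μ {ω | P ω} := by
  rw [sum_pr_eq_and]
  exact pr_congr fun ω => by simp

lemma sum_filter_eq_pr [DecidableEq α] (X : Ω → α) (x : α) :
    ∑ ω ∈ univ.filter (X · = x), μ ω = pr μ {ω | X ω = x} := by
  classical
  simp [pr, sum_filter, Set.indicator_apply]

end Probability

section Entropy

variable {μ : Ω → ℝ} {q : ℕ} {α β γ : Type*}

lemma ent_congr {X : Ω → α} {Y : Ω → β} (h : ∀ ω ω', X ω' = X ω ↔ Y ω' = Y ω) :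
    ent q μ X = ent q μ Y := by
  simp only [ent, h]

lemma ent_prodMk (X : Ω → α) (Y : Ω → β) :
    ent q μ (fun ω => (X ω, Y ω))
      = -∑ ω, μ ω * Real.logb q (pr μ {ω' | X ω' = X ω ∧ Y ω' = Y ω}) := by
  simp only [ent, Prod.mk.injEq]

lemma ent_le_ent_of_eq_imp_eq (hq : 1 < (q : ℝ)) (h0 : ∀ ω, 0 ≤ μ ω) {X : Ω → α}
    {Y : Ω → β} (h : ∀ ω ω', X ω' = X ω → Y ω' = Y ω) : ent q μ Y ≤ ent q μ X := by
  refine neg_le_neg (sum_le_sum fun ω _ => ?_)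
  rcases (h0 ω).eq_or_lt with hω | hω
  · simp [← hω]
  have hX : 0 < pr μ {ω' | X ω' = X ω} := hω.trans_le (le_pr h0 rfl)
  have hXY : pr μ {ω' | X ω' = X ω} ≤ pr μ {ω' | Y ω' = Y ω} := pr_mono h0 (h ω)
  exact mul_le_mul_of_nonneg_left
    ((Real.logb_le_logb hq hX (hX.trans_le hXY)).2 hXY) hω.le

lemma condEnt_eq_sum (X : Ω → α) (Y : Ω → β) :
    condEnt q μ X Y = ∑ ω, μ ω * (Real.logb q (pr μ {ω' | Y ω' = Y ω})
      - Real.logb q (pr μ {ω' | X ω' = X ω ∧ Y ω' = Y ω})) := by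
  simp only [condEnt, ent_prodMk]
  simp only [ent, mul_sub, sum_sub_distrib]
  ring

lemma condEnt_term_nonneg (hq : 1 < (q : ℝ)) (h0 : ∀ ω, 0 ≤ μ ω) (X : Ω → α) (Y : Ω → β)
    (ω : Ω) : 0 ≤ μ ω * (Real.logb q (pr μ {ω' | Y ω' = Y ω})
      - Real.logb q (pr μ {ω' | X ω' = X ω ∧ Y ω' = Y ω})) := by
  rcases (h0 ω).eq_or_lt with hω | hω
  · simp [← hω]
  have hXY : 0 < pr μ {ω' | X ω' = X ω ∧ Y ω' = Y ω} := hω.trans_le (le_pr h0 ⟨rfl, rfl⟩)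
  have hle := pr_mono h0 (μ := μ) fun ω' (h : X ω' = X ω ∧ Y ω' = Y ω) => h.2
  exact mul_nonneg hω.le (sub_nonneg.2 ((Real.logb_le_logb hq hXY (hXY.trans_le hle)).2 hle))

lemma determines_of_condEnt_eq_zero (hq : 1 < (q : ℝ)) (h0 : ∀ ω, 0 ≤ μ ω) {X : Ω → α}
    {Y : Ω → β} (h : condEnt q μ X Y = 0) : Determines μ Y X := by
  rw [condEnt_eq_sum, sum_eq_zero_iff_of_nonneg fun ω _ => condEnt_term_nonneg hq h0 X Y ω] at h
  intro ω ω' hω hω' hY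
  by_contra hX
  set E := {ω'' | X ω'' = X ω ∧ Y ω'' = Y ω}
  set E' := {ω'' | Y ω'' = Y ω}
  have hEE' : E ⊆ E' := fun _ h => h.2
  have hlt : pr μ E < pr μ E' := by
    have := le_pr h0 (μ := μ) (show ω' ∈ E' \ E from ⟨hY, fun h => hX h.1⟩)
    rw [pr_sdiff hEE'] at this
    linarith
  have hE : 0 < pr μ E := hω.trans_le (le_pr h0 ⟨rfl, rfl⟩)
  have := mul_pos hω (sub_pos.2 (Real.logb_lt_logb hq hE hlt))
  linarith [h ω (mem_univ ω)]

lemma Determines.condEnt_eq_zero (h0 : ∀ ω, 0 ≤ μ ω) {X : Ω → α} {Y : Ω → β}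
    (h : Determines μ Y X) : condEnt q μ X Y = 0 := by
  rw [condEnt_eq_sum]
  refine sum_eq_zero fun ω _ => ?_
  rcases (h0 ω).eq_or_lt with hω | hω
  · simp [← hω]
  set E := {ω' | X ω' = X ω ∧ Y ω' = Y ω}
  set E' := {ω' | Y ω' = Y ω}
  suffices pr μ E = pr μ E' by rw [this, sub_self, mul_zero]
  refine sum_congr rfl fun ω' _ => ?_
  rcases (h0 ω').eq_or_lt with hω' | hω'
  · classical
    simp only [Set.indicator_apply, ← hω', ite_self]
  by_cases hY : ω' ∈ E'
  · rw [Set.indicator_of_mem hY, Set.indicator_of_mem (show ω' ∈ E from ⟨h ω ω' hω hω' hY, hY⟩)]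
  · rw [Set.indicator_of_notMem hY, Set.indicator_of_notMem fun h => hY h.2]

lemma sum_mul_div_pr_le (h0 : ∀ ω, 0 ≤ μ ω) [DecidableEq α] (V : Ω → α) (t : Finset α)
    (hV : ∀ ω, V ω ∈ t) (g : α → ℝ) (hg : ∀ v ∈ t, 0 ≤ g v) :
    ∑ ω, μ ω * (g (V ω) / pr μ {ω' | V ω' = V ω}) ≤ ∑ v ∈ t, g v := by
  rw [← sum_fiberwise_of_maps_to (fun ω _ => hV ω)]
  refine sum_le_sum fun v hv => ?_
  have hfiber : ∑ ω ∈ univ.filter (V · = v), μ ω * (g (V ω) / pr μ {ω' | V ω' = V ω})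
      = pr μ {ω | V ω = v} * (g v / pr μ {ω | V ω = v}) := by
    rw [← sum_filter_eq_pr, sum_mul]
    exact sum_congr rfl fun ω hω => by rw [(mem_filter.1 hω).2, sum_filter_eq_pr]
  rw [hfiber]
  rcases (pr_nonneg h0 {ω | V ω = v}).eq_or_lt with h | h
  · simp [← h, hg v hv]
  · rw [mul_div_cancel₀ _ h.ne']

lemma sum_pr_mul_pr_div_pr_le_one (h0 : ∀ ω, 0 ≤ μ ω) (h1 : ∑ ω, μ ω = 1)
    [DecidableEq α] [DecidableEq β] [DecidableEq γ] (X : Ω → α) (Y : Ω → β) (Z : Ω → γ) :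
    ∑ z ∈ univ.image Z, ∑ x ∈ univ.image X, ∑ y ∈ univ.image Y,
      pr μ {ω | X ω = x ∧ Z ω = z} * pr μ {ω | Y ω = y ∧ Z ω = z} / pr μ {ω | Z ω = z}
      ≤ 1 := by
  calc _ ≤ ∑ z ∈ univ.image Z, pr μ {ω | Z ω = z} := by
        refine sum_le_sum fun z _ => ?_
        simp only [← sum_div, ← sum_mul_sum, sum_pr_image_eq_and]
        rcases (pr_nonneg h0 {ω | Z ω = z}).eq_or_lt with h | h
        · simp [← h]
        · rw [mul_div_cancel_right₀ _ h.ne']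
    _ = 1 := by simpa [pr_univ h1] using sum_pr_image_eq_and (μ := μ) Z fun _ => True

lemma sum_mul_pr_ratio_le_one (h0 : ∀ ω, 0 ≤ μ ω) (h1 : ∑ ω, μ ω = 1)
    (X : Ω → α) (Y : Ω → β) (Z : Ω → γ) :
    ∑ ω, μ ω * (pr μ {ω' | X ω' = X ω ∧ Z ω' = Z ω} * pr μ {ω' | Y ω' = Y ω ∧ Z ω' = Z ω}
      / pr μ {ω' | Z ω' = Z ω} / pr μ {ω' | X ω' = X ω ∧ Y ω' = Y ω ∧ Z ω' = Z ω}) ≤ 1 := by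
  classical
  set g : γ × α × β → ℝ := fun v => pr μ {ω | X ω = v.2.1 ∧ Z ω = v.1}
    * pr μ {ω | Y ω = v.2.2 ∧ Z ω = v.1} / pr μ {ω | Z ω = v.1}
  calc _ = ∑ ω, μ ω * (g (Z ω, X ω, Y ω)
        / pr μ {ω' | (Z ω', X ω', Y ω') = (Z ω, X ω, Y ω)}) := by
        refine sum_congr rfl fun ω _ => ?_
        simp only [g, Prod.mk.injEq]
        congr 3
        ext ω'
        exact ⟨fun ⟨hx, hy, hz⟩ => ⟨hz, hx, hy⟩, fun ⟨hz, hx, hy⟩ => ⟨hx, hy, hz⟩⟩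
    _ ≤ ∑ v ∈ univ.image Z ×ˢ univ.image X ×ˢ univ.image Y, g v :=
        sum_mul_div_pr_le h0 (fun ω => (Z ω, X ω, Y ω)) _ (fun ω => by simp) g fun v _ =>
          div_nonneg (mul_nonneg (pr_nonneg h0 _) (pr_nonneg h0 _)) (pr_nonneg h0 _)
    _ ≤ 1 := by
        simp only [sum_product, g]
        exact sum_pr_mul_pr_div_pr_le_one h0 h1 X Y Z

lemma mul_logb_le_div_log (hq : 1 < (q : ℝ)) {m r : ℝ} (hm : 0 ≤ m) (hr : 0 < r) :
    m * Real.logb q r ≤ (m * r - m) / Real.log q := by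
  rw [← mul_sub_one, mul_div_assoc]
  exact mul_le_mul_of_nonneg_left
    ((div_le_div_iff_of_pos_right (Real.log_pos hq)).2 (Real.log_le_sub_one_of_pos hr)) hm

lemma ent_submod (hq : 1 < (q : ℝ)) (h0 : ∀ ω, 0 ≤ μ ω) (h1 : ∑ ω, μ ω = 1)
    (X : Ω → α) (Y : Ω → β) (Z : Ω → γ) :
    ent q μ (fun ω => (X ω, Y ω, Z ω)) + ent q μ Z
      ≤ ent q μ (fun ω => (X ω, Z ω)) + ent q μ (fun ω => (Y ω, Z ω)) := by
  set a : Ω → ℝ := fun ω => pr μ {ω' | X ω' = X ω ∧ Z ω' = Z ω}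
  set b : Ω → ℝ := fun ω => pr μ {ω' | Y ω' = Y ω ∧ Z ω' = Z ω}
  set c : Ω → ℝ := fun ω => pr μ {ω' | X ω' = X ω ∧ Y ω' = Y ω ∧ Z ω' = Z ω}
  set d : Ω → ℝ := fun ω => pr μ {ω' | Z ω' = Z ω}
  -- Gibbs' argument: `log r ≤ r - 1` for `r = a b / (d c)`, whose `μ`-mean is at most `1`
  have hterm : ∀ ω, μ ω * (Real.logb q (a ω) + Real.logb q (b ω) - Real.logb q (c ω)
      - Real.logb q (d ω)) ≤ (μ ω * (a ω * b ω / d ω / c ω) - μ ω) / Real.log q := by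
    intro ω
    rcases (h0 ω).eq_or_lt with hω | hω
    · simp [← hω]
    have ha : 0 < a ω := hω.trans_le (le_pr h0 ⟨rfl, rfl⟩)
    have hb : 0 < b ω := hω.trans_le (le_pr h0 ⟨rfl, rfl⟩)
    have hc : 0 < c ω := hω.trans_le (le_pr h0 ⟨rfl, rfl, rfl⟩)
    have hd : 0 < d ω := hω.trans_le (le_pr h0 rfl)
    rw [← Real.logb_mul ha.ne' hb.ne', ← Real.logb_div (by positivity) hc.ne',
      ← Real.logb_div (by positivity) hd.ne', div_div, mul_comm (c ω), ← div_div]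
    exact mul_logb_le_div_log hq hω.le (by positivity)
  have hratio : ∑ ω, μ ω * (a ω * b ω / d ω / c ω) ≤ 1 := sum_mul_pr_ratio_le_one h0 h1 X Y Z
  have hsum := sum_le_sum fun ω (_ : ω ∈ univ) => hterm ω
  rw [← sum_div, sum_sub_distrib, h1] at hsum
  have hneg := hsum.trans (div_nonpos_of_nonpos_of_nonneg (by linarith) (Real.log_pos hq).le)
  simp only [mul_sub, mul_add, sum_sub_distrib, sum_add_distrib] at hneg
  simp only [ent_prodMk, Prod.mk.injEq]
  simp only [ent]
  linarith

lemma condEnt_le_condEnt_comp (hq : 1 < (q : ℝ)) (h0 : ∀ ω, 0 ≤ μ ω) (h1 : ∑ ω, μ ω = 1)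
    (X : Ω → α) (Y : Ω → β) (f : β → γ) :
    condEnt q μ X Y ≤ condEnt q μ X (fun ω => f (Y ω)) := by
  have hXY : ent q μ (fun ω => (X ω, Y ω, f (Y ω))) = ent q μ (fun ω => (X ω, Y ω)) :=
    ent_congr fun ω ω' => by
      simp only [Prod.mk.injEq]
      exact ⟨fun h => ⟨h.1, h.2.1⟩, fun h => ⟨h.1, h.2, by rw [h.2]⟩⟩
  have hY : ent q μ (fun ω => (Y ω, f (Y ω))) = ent q μ Y :=
    ent_congr fun ω ω' => by
      simp only [Prod.mk.injEq]
      exact ⟨fun h => h.1, fun h => ⟨h, by rw [h]⟩⟩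
  have := ent_submod hq h0 h1 X Y fun ω => f (Y ω)
  rw [condEnt, condEnt]
  linarith

lemma condEnt_prodMk_le (hq : 1 < (q : ℝ)) (h0 : ∀ ω, 0 ≤ μ ω) (h1 : ∑ ω, μ ω = 1)
    (X : Ω → α) (Y : Ω → β) (Z : Ω → γ) :
    condEnt q μ (fun ω => (X ω, Y ω)) Z ≤ condEnt q μ X Z + condEnt q μ Y Z := by
  have hassoc : ent q μ (fun ω => ((X ω, Y ω), Z ω)) = ent q μ (fun ω => (X ω, Y ω, Z ω)) :=
    ent_congr fun ω ω' => by simp only [Prod.mk.injEq, and_assoc]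
  have := ent_submod hq h0 h1 X Y Z
  rw [condEnt, condEnt, condEnt]
  linarith

lemma condEnt_le_condEnt_of_determines (hq : 1 < (q : ℝ)) (h0 : ∀ ω, 0 ≤ μ ω)
    {X : Ω → α} {Y : Ω → β} {Z : Ω → γ} (h : Determines μ (fun ω => (X ω, Z ω)) Y) :
    condEnt q μ Y Z ≤ condEnt q μ X Z := by
  have hmono : ent q μ (fun ω => (Y ω, Z ω)) ≤ ent q μ (fun ω => (Y ω, X ω, Z ω)) :=
    ent_le_ent_of_eq_imp_eq hq h0 fun ω ω' h => by
      simp only [Prod.mk.injEq] at h ⊢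
      exact ⟨h.1, h.2.2⟩
  have hdet : condEnt q μ Y (fun ω => (X ω, Z ω)) = 0 := h.condEnt_eq_zero h0
  rw [condEnt] at hdet ⊢
  rw [condEnt]
  linarith

lemma condEnt_prodMk_eq_of_pr_eq_mul (h0 : ∀ ω, 0 ≤ μ ω) (X : Ω → α) (Y : Ω → β) (Z : Ω → γ)
    (h : ∀ ω, pr μ {ω' | X ω' = X ω ∧ Y ω' = Y ω ∧ Z ω' = Z ω}
      = pr μ {ω' | X ω' = X ω} * (pr μ {ω' | Y ω' = Y ω} * pr μ {ω' | Z ω' = Z ω})) :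
    condEnt q μ (fun ω => (X ω, Y ω)) Z = ent q μ X + ent q μ Y := by
  have hsplit : ∀ ω, μ ω * Real.logb q (pr μ {ω' | X ω' = X ω ∧ Y ω' = Y ω ∧ Z ω' = Z ω})
      = μ ω * Real.logb q (pr μ {ω' | X ω' = X ω}) + μ ω * Real.logb q (pr μ {ω' | Y ω' = Y ω})
        + μ ω * Real.logb q (pr μ {ω' | Z ω' = Z ω}) := by
    intro ω
    rcases (h0 ω).eq_or_lt with hω | hω
    · simp [← hω]
    have hX : 0 < pr μ {ω' | X ω' = X ω} := hω.trans_le (le_pr h0 rfl)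
    have hY : 0 < pr μ {ω' | Y ω' = Y ω} := hω.trans_le (le_pr h0 rfl)
    have hZ : 0 < pr μ {ω' | Z ω' = Z ω} := hω.trans_le (le_pr h0 rfl)
    rw [h ω, Real.logb_mul hX.ne' (by positivity), Real.logb_mul hY.ne' hZ.ne']
    ring
  simp only [condEnt, ent_prodMk, Prod.mk.injEq, and_assoc]
  simp only [ent, hsplit, sum_add_distrib]
  ring

lemma ent_eq_of_pr_eq (h1 : ∑ ω, μ ω = 1) {X : Ω → α} {c : ℝ}
    (h : ∀ ω, pr μ {ω' | X ω' = X ω} = c) : ent q μ X = -Real.logb q c := by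
  simp only [ent, h, ← sum_mul, h1, one_mul]

end Entropy

section Uniform

variable {μ : Ω → ℝ} {α β γ : Type*} {c : ℝ}

lemma pr_mem_eq_card_mul [DecidableEq α] {V : Ω → α} (hV : ∀ v, pr μ {ω | V ω = v} = c)
    (t : Finset α) : pr μ {ω | V ω ∈ t} = t.card * c := by
  simpa [hV] using (sum_pr_eq_and (μ := μ) V t fun _ => True).symm

lemma card_mul_eq_one_of_pr_eq [Fintype α] (h1 : ∑ ω, μ ω = 1) {V : Ω → α}
    (hV : ∀ v, pr μ {ω | V ω = v} = c) : Fintype.card α * c = 1 := by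
  classical
  simpa [pr_univ h1] using (pr_mem_eq_card_mul hV univ).symm

variable {V : Ω → β × γ}

lemma pr_fst_eq_card_mul [Fintype γ] (hV : ∀ v, pr μ {ω | V ω = v} = c) (b : β) :
    pr μ {ω | (V ω).1 = b} = Fintype.card γ * c := by
  classical
  have hb : {ω | (V ω).1 = b} = {ω | V ω ∈ {b} ×ˢ univ} := by
    ext
    simp only [Set.mem_ofPred_eq, mem_product, mem_singleton, mem_univ, and_true]
  rw [hb, pr_mem_eq_card_mul hV]
  simp

lemma pr_snd_eq_card_mul [Fintype β] (hV : ∀ v, pr μ {ω | V ω = v} = c) (g : γ) :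
    pr μ {ω | (V ω).2 = g} = Fintype.card β * c := by
  classical
  have hg : {ω | (V ω).2 = g} = {ω | V ω ∈ univ ×ˢ {g}} := by
    ext
    simp only [Set.mem_ofPred_eq, mem_product, mem_singleton, mem_univ, true_and]
  rw [hg, pr_mem_eq_card_mul hV]
  simp

lemma pr_fst_eq_of_pr_eq [Fintype β] [Fintype γ] (h1 : ∑ ω, μ ω = 1)
    (hV : ∀ v, pr μ {ω | V ω = v} = c) (b : β) :
    pr μ {ω | (V ω).1 = b} = (Fintype.card β : ℝ)⁻¹ := by
  have h := card_mul_eq_one_of_pr_eq h1 hV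
  rw [Fintype.card_prod, Nat.cast_mul] at h
  rw [pr_fst_eq_card_mul hV]
  exact eq_inv_of_mul_eq_one_left (by rw [← h]; ring)

lemma pr_fst_eq_and_snd_eq_of_pr_eq [Fintype β] [Fintype γ] (h1 : ∑ ω, μ ω = 1)
    (hV : ∀ v, pr μ {ω | V ω = v} = c) (b : β) (g : γ) :
    pr μ {ω | (V ω).1 = b ∧ (V ω).2 = g}
      = pr μ {ω | (V ω).1 = b} * pr μ {ω | (V ω).2 = g} := by
  have h := card_mul_eq_one_of_pr_eq h1 hV
  rw [Fintype.card_prod, Nat.cast_mul] at h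
  have hbg : pr μ {ω | (V ω).1 = b ∧ (V ω).2 = g} = c := by
    rw [← hV (b, g)]
    exact pr_congr fun ω => (Prod.ext_iff (x := V ω) (y := (b, g))).symm
  rw [hbg, pr_fst_eq_card_mul hV, pr_snd_eq_card_mul hV]
  linear_combination (-c) * h

end Uniform

namespace Scheme

variable {q N K L : ℕ} {F : Type} [Field F] [Fintype F] (S : Scheme q N K L F Ω)

def sideInfo (k : Fin K) (ω : Ω) :
    ({m : Fin K // m ≠ k} → S.RT) × ({m : Fin K // m ≠ k} → Fin L → F) × S.UT :=
  (fun m => S.R m ω, fun m => S.W m ω, S.U ω)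

lemma one_lt_q (S : Scheme q N K L F Ω) : 1 < (q : ℝ) := by
  rw [← S.card_F]
  exact_mod_cast Fintype.one_lt_card

section Determinism

variable {S} {γ : Type*} {k : Fin K} {Z : Ω → γ}

lemma determines_query (hZ : Determines S.μ Z (S.sideInfo k)) (n : Fin N) :
    Determines S.μ Z (S.Q n k) :=
  ((determines_of_condEnt_eq_zero S.one_lt_q S.μ_nonneg (S.query_det k)).comp (· n)).trans
    (hZ.comp (·.2.2))

lemma determines_message_of_ne (hZ : Determines S.μ Z (S.sideInfo k)) {m : Fin K} (hm : m ≠ k) :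
    Determines S.μ Z (S.W m) :=
  hZ.comp (·.2.1 ⟨m, hm⟩)

lemma determines_randomness_of_ne (hZ : Determines S.μ Z (S.sideInfo k)) {m : Fin K}
    (hm : m ≠ k) : Determines S.μ Z (S.R m) :=
  hZ.comp (·.1 ⟨m, hm⟩)

lemma determines_answer_of_ne (hZ : Determines S.μ Z (S.sideInfo k)) {n : Fin N}
    (h1 : S.e1 k ≠ n) (h2 : S.e2 k ≠ n) : Determines S.μ Z (S.A n k) := by
  have hstored : ∀ m : {m : Fin K // S.e1 m = n ∨ S.e2 m = n}, (m : Fin K) ≠ k := by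
    rintro ⟨m, hm⟩ rfl
    exact hm.elim h1 h2
  exact (determines_of_condEnt_eq_zero S.one_lt_q S.μ_nonneg (S.answer_det n k)).trans
    ((determines_query hZ n).prodMk
      ((Determines.pi fun m => determines_message_of_ne hZ (hstored m)).prodMk
        (Determines.pi fun m => determines_randomness_of_ne hZ (hstored m))))

lemma determines_message (hZ : Determines S.μ Z (S.sideInfo k))
    (h1 : Determines S.μ Z (S.A (S.e1 k) k)) (h2 : Determines S.μ Z (S.A (S.e2 k) k)) :
    Determines S.μ Z (S.W k) := by
  refine (determines_of_condEnt_eq_zero S.one_lt_q S.μ_nonneg (S.reliability k)).trans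
    ((Determines.pi fun n => ?_).prodMk (hZ.comp (·.2.2)))
  by_cases hn1 : S.e1 k = n
  · exact hn1 ▸ h1
  by_cases hn2 : S.e2 k = n
  · exact hn2 ▸ h2
  exact determines_answer_of_ne hZ hn1 hn2

lemma determines_randomness (hZ : Determines S.μ Z (S.sideInfo k))
    (h1 : Determines S.μ Z (S.A (S.e1 k) k)) (h2 : Determines S.μ Z (S.A (S.e2 k) k)) :
    Determines S.μ Z (S.R k) := by
  have hrecov := S.rand_recov k k (S.e1 k) (Or.inl rfl)
  refine (determines_of_condEnt_eq_zero S.one_lt_q S.μ_nonneg hrecov).trans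
    (h1.prodMk ((Determines.pi fun m => ?_).prodMk
      ((Determines.pi fun m => determines_randomness_of_ne hZ m.2.2).prodMk
        (determines_query hZ _))))
  by_cases hm : (m : Fin K) = k
  · rw [hm]
    exact determines_message hZ h1 h2
  · exact determines_message_of_ne hZ hm

end Determinism

lemma determines_message_randomness (k : Fin K) :
    Determines S.μ (fun ω => ((S.A (S.e1 k) k ω, S.A (S.e2 k) k ω), S.sideInfo k ω))
      (fun ω => (S.W k ω, S.R k ω)) := by
  set Z := fun ω => ((S.A (S.e1 k) k ω, S.A (S.e2 k) k ω), S.sideInfo k ω)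
  have hZ : Determines S.μ Z (S.sideInfo k) :=
    determines_of_eq_imp_eq fun _ _ h => congrArg Prod.snd h
  have h1 : Determines S.μ Z (S.A (S.e1 k) k) :=
    determines_of_eq_imp_eq fun _ _ h => congrArg (·.1.1) h
  have h2 : Determines S.μ Z (S.A (S.e2 k) k) :=
    determines_of_eq_imp_eq fun _ _ h => congrArg (·.1.2) h
  exact (determines_message hZ h1 h2).prodMk (determines_randomness hZ h1 h2)

lemma pr_messages_randomness_query (t : Set (Fin K → Fin L → F)) (s : Fin K → Set S.RT)
    (u : Set S.UT) :
    pr S.μ {ω | (fun m => S.W m ω) ∈ t ∧ (∀ m, S.R m ω ∈ s m) ∧ S.U ω ∈ u}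
      = pr S.μ {ω | (fun m => S.W m ω) ∈ t} * (∏ m, pr S.μ {ω | S.R m ω ∈ s m})
        * pr S.μ {ω | S.U ω ∈ u} := by
  calc _ = pr S.μ (S.U ⁻¹' u ∩ (fun ω => (fun m => S.W m ω, fun m => S.R m ω)) ⁻¹'
          {p | p.1 ∈ t ∧ ∀ m, p.2 m ∈ s m}) :=
        pr_congr fun ω => by
          simp only [Set.mem_ofPred_eq, Set.mem_inter_iff, Set.mem_preimage]
          tauto
    _ = pr S.μ {ω | S.U ω ∈ u} * pr S.μ {ω | (fun m => S.W m ω) ∈ t ∧ ∀ m, S.R m ω ∈ s m} :=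
        S.U_indep _ _
    _ = _ := by rw [S.R_indep s t]; ring

lemma pr_funSplitAt_messages_eq (k : Fin K)
    (v : (Fin L → F) × ({m : Fin K // m ≠ k} → Fin L → F)) :
    pr S.μ {ω | Equiv.funSplitAt k _ (fun m => S.W m ω) = v} = (1 / (q : ℝ) ^ L) ^ K := by
  rw [← S.W_unif ((Equiv.funSplitAt k _).symm v)]
  exact pr_congr fun ω => (Equiv.eq_symm_apply _).symm

lemma pr_message_eq (k : Fin K) (w : Fin L → F) :
    pr S.μ {ω | S.W k ω = w} = ((q : ℝ) ^ L)⁻¹ := by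
  refine (pr_fst_eq_of_pr_eq S.μ_sum (S.pr_funSplitAt_messages_eq k) w).trans ?_
  rw [Fintype.card_fun, Fintype.card_fin, S.card_F, Nat.cast_pow]

lemma pr_message_and_others_eq (k : Fin K) (w : Fin L → F) (g : {m : Fin K // m ≠ k} → Fin L → F) :
    pr S.μ {ω | S.W k ω = w ∧ (S.sideInfo k ω).2.1 = g}
      = pr S.μ {ω | S.W k ω = w} * pr S.μ {ω | (S.sideInfo k ω).2.1 = g} :=
  pr_fst_eq_and_snd_eq_of_pr_eq S.μ_sum (S.pr_funSplitAt_messages_eq k) w g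

lemma ent_message (k : Fin K) : ent q S.μ (S.W k) = L := by
  rw [ent_eq_of_pr_eq S.μ_sum fun ω => S.pr_message_eq k (S.W k ω), Real.logb_inv,
    Real.logb_pow, Real.logb_self_eq_one S.one_lt_q, mul_one, neg_neg]

lemma pr_sideInfo_eq (k : Fin K) (ω : Ω) :
    pr S.μ {ω' | S.sideInfo k ω' = S.sideInfo k ω}
      = pr S.μ {ω' | (S.sideInfo k ω').2.1 = (S.sideInfo k ω).2.1}
        * (∏ m ∈ {k}ᶜ, pr S.μ {ω' | S.R m ω' = S.R m ω}) * pr S.μ {ω' | S.U ω' = S.U ω} := by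
  classical
  calc _ = pr S.μ {ω' | (fun m => S.W m ω') ∈
          {v | (fun m : {m : Fin K // m ≠ k} => v m) = (S.sideInfo k ω).2.1}
        ∧ (∀ m, S.R m ω' ∈ if m = k then Set.univ else {S.R m ω})
        ∧ S.U ω' ∈ ({S.U ω} : Set S.UT)} :=
        pr_congr fun ω' => by
          simp only [sideInfo, Prod.mk.injEq, funext_iff, Subtype.forall, Set.mem_ofPred_eq,
            Set.mem_ite_univ_left, Set.mem_singleton_iff]
          tauto
    _ = _ := by
        have hRk : pr S.μ {ω' | S.R k ω' ∈ Set.univ} = 1 := by simpa using pr_univ S.μ_sum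
        have hR : ∏ m ∈ {k}ᶜ, pr S.μ {ω' | S.R m ω' ∈ if m = k then Set.univ else {S.R m ω}}
            = ∏ m ∈ {k}ᶜ, pr S.μ {ω' | S.R m ω' = S.R m ω} :=
          prod_congr rfl fun m hm => by rw [if_neg (by simpa using hm)]; rfl
        rw [S.pr_messages_randomness_query, Fintype.prod_eq_mul_prod_compl k, if_pos rfl, hRk, hR,
          one_mul]
        rfl

lemma pr_message_randomness_sideInfo_eq (k : Fin K) (ω : Ω) :
    pr S.μ {ω' | S.W k ω' = S.W k ω ∧ S.R k ω' = S.R k ω ∧ S.sideInfo k ω' = S.sideInfo k ω}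
      = pr S.μ {ω' | S.W k ω' = S.W k ω}
        * pr S.μ {ω' | (S.sideInfo k ω').2.1 = (S.sideInfo k ω).2.1}
        * (pr S.μ {ω' | S.R k ω' = S.R k ω} * ∏ m ∈ {k}ᶜ, pr S.μ {ω' | S.R m ω' = S.R m ω})
        * pr S.μ {ω' | S.U ω' = S.U ω} := by
  classical
  calc _ = pr S.μ {ω' | (fun m => S.W m ω') ∈ {v | v k = S.W k ω ∧
          (fun m : {m : Fin K // m ≠ k} => v m) = (S.sideInfo k ω).2.1}
        ∧ (∀ m, S.R m ω' ∈ ({S.R m ω} : Set S.RT)) ∧ S.U ω' ∈ ({S.U ω} : Set S.UT)} :=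
        pr_congr fun ω' => by
          simp only [sideInfo, Prod.mk.injEq, funext_iff, Subtype.forall, Set.mem_ofPred_eq,
            Set.mem_singleton_iff]
          constructor
          · rintro ⟨hWk, hRk, hR, hW, hU⟩
            exact ⟨⟨hWk, hW⟩, fun m => (eq_or_ne m k).elim (· ▸ hRk) (hR m), hU⟩
          · rintro ⟨⟨hWk, hW⟩, hR, hU⟩
            exact ⟨hWk, hR k, fun m _ => hR m, hW, hU⟩
    _ = _ := by
        rw [S.pr_messages_randomness_query, Fintype.prod_eq_mul_prod_compl k,
          ← S.pr_message_and_others_eq]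
        rfl

lemma condEnt_message_randomness_sideInfo (k : Fin K) :
    condEnt q S.μ (fun ω => (S.W k ω, S.R k ω)) (S.sideInfo k) = L + ent q S.μ (S.R k) := by
  rw [condEnt_prodMk_eq_of_pr_eq_mul S.μ_nonneg _ _ _ fun ω => ?_, S.ent_message]
  rw [S.pr_message_randomness_sideInfo_eq, S.pr_sideInfo_eq]
  ring

end Scheme

theorem sum_entropy_of_answers_general
    {q N K L : ℕ} {F : Type} [Field F] [Fintype F] {Ω : Type} [Fintype Ω]
    (hL : 1 ≤ L)
    (S : Scheme q N K L F Ω) (k : Fin K) (i j : Fin N)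
    (hi : S.e1 k = i) (hj : S.e2 k = j) :
    (condEnt q S.μ (S.A i k)
        (fun ω => (fun m : {m : Fin K // m ≠ k} => S.R m ω,
                   fun m : {m : Fin K // m ≠ k} => S.W m ω, S.U ω))
      + condEnt q S.μ (S.A j k)
        (fun ω => (fun m : {m : Fin K // m ≠ k} => S.R m ω,
                   fun m : {m : Fin K // m ≠ k} => S.W m ω, S.U ω))
      ≤ condEnt q S.μ (S.A i k) S.U + condEnt q S.μ (S.A j k) S.U) ∧
    ((1 + ent q S.μ (S.R k) / L) * L
      ≤ condEnt q S.μ (S.A i k)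
          (fun ω => (fun m : {m : Fin K // m ≠ k} => S.R m ω,
                     fun m : {m : Fin K // m ≠ k} => S.W m ω, S.U ω))
        + condEnt q S.μ (S.A j k)
          (fun ω => (fun m : {m : Fin K // m ≠ k} => S.R m ω,
                     fun m : {m : Fin K // m ≠ k} => S.W m ω, S.U ω))) := by
  subst hi hj
  have hq := S.one_lt_q
  refine ⟨add_le_add ?_ ?_, ?_⟩
  · exact condEnt_le_condEnt_comp hq S.μ_nonneg S.μ_sum _ (S.sideInfo k) (·.2.2)
  · exact condEnt_le_condEnt_comp hq S.μ_nonneg S.μ_sum _ (S.sideInfo k) (·.2.2)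
  have hL0 : (L : ℝ) ≠ 0 := Nat.cast_ne_zero.2 (by omega)
  calc (1 + ent q S.μ (S.R k) / L) * L
      = condEnt q S.μ (fun ω => (S.W k ω, S.R k ω)) (S.sideInfo k) := by
        rw [S.condEnt_message_randomness_sideInfo]
        field_simp
    _ ≤ condEnt q S.μ (fun ω => (S.A (S.e1 k) k ω, S.A (S.e2 k) k ω)) (S.sideInfo k) :=
        condEnt_le_condEnt_of_determines hq S.μ_nonneg (S.determines_message_randomness k)
    _ ≤ _ := condEnt_prodMk_le hq S.μ_nonneg S.μ_sum _ _ _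

/-- **Lemma 3.** For the two servers `i = e1 k` and `j = e2 k` sharing message `W k`
and randomness `R k`:
`H(A_i^[k]|𝒬) + H(A_j^[k]|𝒬)
  ≥ H(A_i^[k]|R_k̄, W_k̄, 𝒬) + H(A_j^[k]|R_k̄, W_k̄, 𝒬) ≥ (1 + ρ)·L`,
where `ρ = H(R k)/L`. -/
theorem sum_entropy_of_answers
    {q N K L : ℕ} {F : Type} [Field F] [Fintype F] {Ω : Type} [Fintype Ω]
    (hN : 3 ≤ N) (hK : 2 ≤ K) (hL : 1 ≤ L)
    (S : Scheme q N K L F Ω) (k : Fin K) (i j : Fin N)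
    (hi : S.e1 k = i) (hj : S.e2 k = j) :
    (condEnt q S.μ (S.A i k)
        (fun ω => (fun m : {m : Fin K // m ≠ k} => S.R m ω,
                   fun m : {m : Fin K // m ≠ k} => S.W m ω, S.U ω))
      + condEnt q S.μ (S.A j k)
        (fun ω => (fun m : {m : Fin K // m ≠ k} => S.R m ω,
                   fun m : {m : Fin K // m ≠ k} => S.W m ω, S.U ω))
      ≤ condEnt q S.μ (S.A i k) S.U + condEnt q S.μ (S.A j k) S.U) ∧
    ((1 + ent q S.μ (S.R k) / L) * L
      ≤ condEnt q S.μ (S.A i k)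
          (fun ω => (fun m : {m : Fin K // m ≠ k} => S.R m ω,
                     fun m : {m : Fin K // m ≠ k} => S.W m ω, S.U ω))
        + condEnt q S.μ (S.A j k)
          (fun ω => (fun m : {m : Fin K // m ≠ k} => S.R m ω,
                     fun m : {m : Fin K // m ≠ k} => S.W m ω, S.U ω))) :=
  sum_entropy_of_answers_general hL S k i j hi hj

end SPIR
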